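/- Let {z_j} be an interpolating sequence in the open unit disc 𝔻 with separation constant δ := min{δ_j : j ≥ 1} > 0, where δ_j = Π_{k ≠ j} |(z_j − z_k)/(1 − \overline{z_k}z_j)|. Define g_j(z) := (B_j(z)/B_j(z_j))·((1 − |z_j|²)/(1 − \overline{z_j}z))²·exp(−Σ_{|z_m| ≥ |z_j|} ((1 + \overline{z_m}z)/(1 − \overline{z_m}z) − (1 + \overline{z_m}z_j)/(1 − \overline{z_m}z_j))(1 − |z_m|²)). Then there exists a constant C(δ) depending only on δ such that for all z ∈ 𝔻: |g_j(z)| ≤ C(δ)·((1 − |z_j|²)/|1 − \overline{z_j}z|)²·exp(−Σ_{|z_m| ≥ |z_j|} ((1 − |z_m|²)/|1 − \overline{z_m}z|)²). -/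

import Mathlib

open Complex MeasureTheory Metric Set Filter Topology ComplexConjugate

noncomputable section

namespace ThinPaper

/-- `δ j = ∏_{k ≠ j} |(z j - z k)/(1 - conj (z k) * z j)|`. -/
def delta (z : ℕ → ℂ) (j : ℕ) : ℝ :=
  ∏' k : {k : ℕ // k ≠ j}, ‖(z j - z k) / (1 - conj (z (k : ℕ)) * z j)‖

/-- A sequence in the unit disc is *thin* if `δ j → 1`. -/
def IsThin (z : ℕ → ℂ) : Prop := Tendsto (delta z) atTop (𝓝 1)

/-- Membership in `H^∞`: bounded and analytic on the open unit disc. -/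
def MemHInf (f : ℂ → ℂ) : Prop :=
  DifferentiableOn ℂ f (ball (0 : ℂ) 1) ∧ ∃ M : ℝ, ∀ w ∈ ball (0 : ℂ) 1, ‖f w‖ ≤ M

/-- The supremum norm of a function on the open unit disc. -/
def hinfNorm (f : ℂ → ℂ) : ℝ := ⨆ w : ball (0 : ℂ) 1, ‖f (w : ℂ)‖

/-- A bounded sequence of complex numbers (member of `ℓ^∞`). -/
def BddSeq (a : ℕ → ℂ) : Prop := ∃ M : ℝ, ∀ n, ‖a n‖ ≤ M

/-- `sup_{j ≥ N} |a j|`. -/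
def supFrom (N : ℕ) (a : ℕ → ℂ) : ℝ := ⨆ j : {j : ℕ // N ≤ j}, ‖a (j : ℕ)‖

/-- Eventual 1-interpolating sequence for `H^∞` (EIS_∞). -/
def IsEISInf (z : ℕ → ℂ) : Prop :=
  ∀ ε : ℝ, 0 < ε → ∃ N : ℕ, ∀ a : ℕ → ℂ, BddSeq a →
    ∃ f : ℂ → ℂ, MemHInf f ∧ (∀ n, N ≤ n → f (z n) = a n) ∧
      hinfNorm f ≤ (1 + ε) * supFrom N a

/-- Interpolating sequence for `H^∞`. -/
def IsInterpolating (z : ℕ → ℂ) : Prop :=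
  ∀ a : ℕ → ℂ, BddSeq a → ∃ f : ℂ → ℂ, MemHInf f ∧ ∀ n, f (z n) = a n

/-- The Blaschke product with zeros `{z k : k ≠ j}`. -/
def Bj (z : ℕ → ℂ) (j : ℕ) (w : ℂ) : ℂ :=
  ∏' k : {k : ℕ // k ≠ j},
    (-(conj (z (k : ℕ))) / (‖z (k : ℕ)‖ : ℂ)) *
      ((w - z (k : ℕ)) / (1 - conj (z (k : ℕ)) * w))

/-- Jones' function `g j` (without the convention `g j = 0` when `δ j = 0`). -/
def jonesG (z : ℕ → ℂ) (j : ℕ) (w : ℂ) : ℂ :=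
  (Bj z j w / Bj z j (z j)) *
    (((1 - ‖z j‖ ^ 2 : ℝ) : ℂ) / (1 - conj (z j) * w)) ^ 2 *
    Complex.exp (-∑' m : {m : ℕ // ‖z j‖ ≤ ‖z (m : ℕ)‖},
      ((1 + conj (z (m : ℕ)) * w) / (1 - conj (z (m : ℕ)) * w) -
        (1 + conj (z (m : ℕ)) * z j) / (1 - conj (z (m : ℕ)) * z j)) *
        ((1 - ‖z (m : ℕ)‖ ^ 2 : ℝ) : ℂ))

def rho (z : ℕ → ℂ) (j k : ℕ) : ℝ :=
  ‖(z j - z k) / (1 - conj (z k) * z j)‖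

lemma normSq_identity (a b : ℂ) :
    normSq (1 - conj b * a) - normSq (a - b) = (1 - normSq a) * (1 - normSq b) := by
  simp only [Complex.normSq_apply, Complex.sub_re, Complex.sub_im, Complex.mul_re,
    Complex.mul_im, Complex.conj_re, Complex.conj_im, Complex.one_re, Complex.one_im]
  ring

lemma one_sub_mul_ne {a b : ℂ} (ha : ‖a‖ < 1) (hb : ‖b‖ ≤ 1) :
    1 - conj b * a ≠ 0 := by
  intro h
  have h1 : conj b * a = 1 := by
    have := sub_eq_zero.mp h; exact this.symm
  have : ‖conj b * a‖ < 1 := by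
    rw [norm_mul, Complex.norm_conj]
    calc ‖b‖ * ‖a‖ ≤ 1 * ‖a‖ := by
          exact mul_le_mul_of_nonneg_right hb (norm_nonneg a)
      _ = ‖a‖ := one_mul _
      _ < 1 := ha
  rw [h1, norm_one] at this; exact lt_irrefl _ this

lemma abs_sub_le_abs_one_sub {a b : ℂ} (ha : ‖a‖ ≤ 1) (hb : ‖b‖ ≤ 1) :
    ‖a - b‖ ≤ ‖1 - conj b * a‖ := by
  rw [Complex.norm_def, Complex.norm_def]
  apply Real.sqrt_le_sqrt
  have h1 : normSq a ≤ 1 := by rw [← Complex.sq_norm]; nlinarith [norm_nonneg a]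
  have h2 : normSq b ≤ 1 := by rw [← Complex.sq_norm]; nlinarith [norm_nonneg b]
  nlinarith [normSq_identity a b]

lemma rho_nonneg (z : ℕ → ℂ) (j k : ℕ) : 0 ≤ rho z j k := norm_nonneg _

lemma rho_le_one {z : ℕ → ℂ} (hz : ∀ n, ‖z n‖ < 1) (j k : ℕ) :
    rho z j k ≤ 1 := by
  rw [rho, norm_div]
  rcases eq_or_ne (1 - conj (z k) * z j) 0 with h | h
  · simp [h]
  · rw [div_le_one (norm_pos_iff.mpr h)]
    exact abs_sub_le_abs_one_sub (hz j).le (hz k).le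

lemma one_sub_rho_sq {z : ℕ → ℂ} (hz : ∀ n, ‖z n‖ < 1) (j k : ℕ) :
    1 - rho z j k ^ 2 =
      (1 - ‖z j‖ ^ 2) * (1 - ‖z k‖ ^ 2) /
        normSq (1 - conj (z k) * z j) := by
  have hne : 1 - conj (z k) * z j ≠ 0 := one_sub_mul_ne (hz j) (hz k).le
  have hN : normSq (1 - conj (z k) * z j) ≠ 0 := by
    simpa [Complex.normSq_eq_zero] using hne
  have : rho z j k ^ 2 = normSq (z j - z k) / normSq (1 - conj (z k) * z j) := by
    rw [rho, Complex.sq_norm, Complex.normSq_div]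
  rw [this, Complex.sq_norm, Complex.sq_norm]
  rw [eq_div_iff hN, sub_mul, one_mul, div_mul_cancel₀ _ hN]
  nlinarith [normSq_identity (z j) (z k)]

section Delta
variable {z : ℕ → ℂ}

lemma delta_hasProd_iInf (hz : ∀ n, ‖z n‖ < 1) (j : ℕ) :
    HasProd (fun k : {k : ℕ // k ≠ j} => rho z j k)
      (⨅ F : Finset {k : ℕ // k ≠ j}, ∏ k ∈ F, rho z j (k : ℕ)) := by
  have hant : Antitone (fun F : Finset {k : ℕ // k ≠ j} => ∏ k ∈ F, rho z j (k : ℕ)) := by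
    intro F G hFG
    dsimp only
    rw [← Finset.prod_sdiff hFG]
    have h1 : ∏ k ∈ G \ F, rho z j (k : ℕ) ≤ 1 :=
      Finset.prod_le_one (fun k _ => rho_nonneg z j k) (fun k _ => rho_le_one hz j k)
    have h2 : 0 ≤ ∏ k ∈ F, rho z j (k : ℕ) :=
      Finset.prod_nonneg (fun k _ => rho_nonneg z j k)
    exact mul_le_of_le_one_left h2 h1 |>.trans_eq rfl
  have hbdd : BddBelow (Set.range fun F : Finset {k : ℕ // k ≠ j} =>
      ∏ k ∈ F, rho z j (k : ℕ)) := by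
    refine ⟨0, ?_⟩
    rintro x ⟨F, rfl⟩
    exact Finset.prod_nonneg (fun k _ => rho_nonneg z j k)
  exact tendsto_atTop_ciInf hant hbdd

lemma delta_hasProd (hz : ∀ n, ‖z n‖ < 1) (j : ℕ) :
    HasProd (fun k : {k : ℕ // k ≠ j} => rho z j k) (delta z j) := by
  have h := delta_hasProd_iInf hz j
  have : delta z j = ⨅ F : Finset {k : ℕ // k ≠ j}, ∏ k ∈ F, rho z j (k : ℕ) := by
    rw [delta]; exact h.tprod_eq
  rw [this]; exact h

lemma delta_le_prod (hz : ∀ n, ‖z n‖ < 1) (j : ℕ) (F : Finset {k : ℕ // k ≠ j}) :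
    delta z j ≤ ∏ k ∈ F, rho z j (k : ℕ) := by
  have h := delta_hasProd_iInf hz j
  have hd : delta z j = ⨅ F : Finset {k : ℕ // k ≠ j}, ∏ k ∈ F, rho z j (k : ℕ) := by
    rw [delta]; exact h.tprod_eq
  rw [hd]
  refine ciInf_le ⟨0, ?_⟩ F
  rintro x ⟨G, rfl⟩
  exact Finset.prod_nonneg (fun k _ => rho_nonneg z j k)

lemma delta_nonneg (hz : ∀ n, ‖z n‖ < 1) (j : ℕ) : 0 ≤ delta z j := by
  have h := delta_hasProd hz j
  have := delta_hasProd_iInf hz j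
  have hd : delta z j = ⨅ F : Finset {k : ℕ // k ≠ j}, ∏ k ∈ F, rho z j (k : ℕ) := by
    rw [delta]; exact this.tprod_eq
  rw [hd]
  exact le_ciInf fun F => Finset.prod_nonneg (fun k _ => rho_nonneg z j k)

lemma delta_le_one (hz : ∀ n, ‖z n‖ < 1) (j : ℕ) : delta z j ≤ 1 := by
  simpa using delta_le_prod hz j ∅

end Delta
lemma re_div_one_sub (u : ℂ) : ((1 + u) / (1 - u)).re = (1 - normSq u) / normSq (1 - u) := by
  rw [Complex.div_re, ← add_div]
  congr 1
  simp only [Complex.normSq_apply, Complex.add_re, Complex.add_im, Complex.sub_re,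
    Complex.sub_im, Complex.one_re, Complex.one_im]
  ring

section LogBound
variable {z : ℕ → ℂ} {δ : ℝ}

lemma delta_le_prod_nat (hz : ∀ n, ‖z n‖ < 1) {j : ℕ} (G : Finset ℕ)
    (hG : j ∉ G) : delta z j ≤ ∏ k ∈ G, rho z j k := by
  classical
  have he : Function.Injective
      (fun x : {x // x ∈ G} => (⟨x.1, fun h => hG (h ▸ x.2)⟩ : {k : ℕ // k ≠ j})) := by
    intro a b hab
    simp only [Subtype.mk.injEq] at hab
    exact Subtype.ext hab
  have h := delta_le_prod hz j (G.attach.map ⟨_, he⟩)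
  rwa [Finset.prod_map, Function.Embedding.coeFn_mk, Finset.prod_attach G (fun k => rho z j k)]
    at h

lemma rho_ge (hz : ∀ n, ‖z n‖ < 1) (hδ : 0 < δ) {j : ℕ} (hδd : δ ≤ delta z j)
    {k : ℕ} (hk : k ≠ j) : δ ≤ rho z j k := by
  have h := delta_le_prod_nat hz (G := {k}) (by simpa using (Ne.symm hk))
  simpa using hδd.trans h

lemma sum_one_sub_rho_sq_le (hz : ∀ n, ‖z n‖ < 1) (hδ : 0 < δ) {j : ℕ}
    (hδd : δ ≤ delta z j) (G : Finset ℕ) (hG : j ∉ G) :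
    ∑ k ∈ G, (1 - rho z j k ^ 2) ≤ 2 * Real.log δ⁻¹ := by
  have hk : ∀ k ∈ G, δ ≤ rho z j k := fun k hkG => rho_ge hz hδ hδd (fun h => hG (h ▸ hkG))
  have hρpos : ∀ k ∈ G, (0:ℝ) < rho z j k := fun k hkG => hδ.trans_le (hk k hkG)
  have step1 : ∑ k ∈ G, (1 - rho z j k ^ 2) ≤ ∑ k ∈ G, (-Real.log (rho z j k ^ 2)) := by
    refine Finset.sum_le_sum fun k hkG => ?_
    have hpos : (0:ℝ) < rho z j k ^ 2 := pow_pos (hρpos k hkG) 2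
    have := Real.log_le_sub_one_of_pos hpos
    linarith
  have hprodpos : (0:ℝ) < ∏ k ∈ G, rho z j k := Finset.prod_pos hρpos
  have step2 : ∑ k ∈ G, (-Real.log (rho z j k ^ 2)) = -(2 * Real.log (∏ k ∈ G, rho z j k)) := by
    rw [Finset.sum_neg_distrib, ← Real.log_prod (fun k hkG => (pow_pos (hρpos k hkG) 2).ne'),
      Finset.prod_pow, Real.log_pow]
    push_cast; ring
  have step3 : Real.log δ ≤ Real.log (∏ k ∈ G, rho z j k) :=
    Real.log_le_log hδ (hδd.trans (delta_le_prod_nat hz G hG))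
  rw [Real.log_inv]
  calc ∑ k ∈ G, (1 - rho z j k ^ 2) ≤ -(2 * Real.log (∏ k ∈ G, rho z j k)) := by
        rw [← step2]; exact step1
    _ ≤ 2 * -Real.log δ := by linarith

lemma blaschke_summable (hz : ∀ n, ‖z n‖ < 1) (hδ : 0 < δ)
    (hδd : ∀ j, δ ≤ delta z j) :
    Summable (fun m : ℕ => 1 - ‖z m‖ ^ 2) := by
  set c₀ : ℝ := 4 / (1 - ‖z 0‖ ^ 2) * (2 * Real.log δ⁻¹) with hc₀
  have hz0 : ‖z 0‖ ^ 2 < 1 := by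
    have := hz 0; nlinarith [norm_nonneg (z 0)]
  have hnonneg : ∀ m : ℕ, 0 ≤ 1 - ‖z m‖ ^ 2 := by
    intro m; have := hz m; nlinarith [norm_nonneg (z m)]
  refine summable_of_sum_le hnonneg (c := 1 + c₀) fun G => ?_
  classical
  have key : ∀ k ∈ G.erase 0, 1 - ‖z k‖ ^ 2 ≤
      4 / (1 - ‖z 0‖ ^ 2) * (1 - rho z 0 k ^ 2) := by
    intro k hkG
    have hN : normSq (1 - conj (z k) * z 0) ≤ 4 := by
      have habs : ‖1 - conj (z k) * z 0‖ ≤ 2 := by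
        calc ‖1 - conj (z k) * z 0‖ ≤
            ‖(1:ℂ)‖ + ‖conj (z k) * z 0‖ := by
              simpa [sub_eq_add_neg] using norm_add_le 1 (-(conj (z k) * z 0))
          _ ≤ 1 + 1 := by
              rw [norm_one]
              gcongr
              rw [norm_mul, Complex.norm_conj]
              exact mul_le_one₀ (hz k).le (norm_nonneg _) (hz 0).le
          _ = 2 := by norm_num
      have := Complex.sq_norm (1 - conj (z k) * z 0)
      nlinarith [norm_nonneg (1 - conj (z k) * z 0)]
    have hNpos : 0 < normSq (1 - conj (z k) * z 0) := by
      rw [Complex.normSq_pos]; exact one_sub_mul_ne (hz 0) (hz k).le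
    have h1 := one_sub_rho_sq hz 0 k
    rw [h1]
    have hA : (0:ℝ) < 1 - ‖z 0‖ ^ 2 := by linarith
    have heq : 4 / (1 - ‖z 0‖ ^ 2) *
        ((1 - ‖z 0‖ ^ 2) * (1 - ‖z k‖ ^ 2) /
          normSq (1 - conj (z k) * z 0)) =
        4 * (1 - ‖z k‖ ^ 2) / normSq (1 - conj (z k) * z 0) := by
      field_simp
    rw [heq, le_div_iff₀ hNpos]
    nlinarith [hnonneg k]
  have hsub : G ⊆ insert 0 (G.erase 0) := by
    intro x hx
    rcases eq_or_ne x 0 with rfl | hx0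
    · exact Finset.mem_insert_self _ _
    · exact Finset.mem_insert_of_mem (Finset.mem_erase.mpr ⟨hx0, hx⟩)
  calc ∑ k ∈ G, (1 - ‖z k‖ ^ 2)
      ≤ ∑ k ∈ insert 0 (G.erase 0), (1 - ‖z k‖ ^ 2) :=
        Finset.sum_le_sum_of_subset_of_nonneg hsub (fun k _ _ => hnonneg k)
    _ = (1 - ‖z 0‖ ^ 2) + ∑ k ∈ G.erase 0, (1 - ‖z k‖ ^ 2) :=
        Finset.sum_insert (Finset.notMem_erase _ _)
    _ ≤ 1 + c₀ := by
        gcongr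
        · nlinarith [norm_nonneg (z 0)]
        · calc ∑ k ∈ G.erase 0, (1 - ‖z k‖ ^ 2)
              ≤ ∑ k ∈ G.erase 0, 4 / (1 - ‖z 0‖ ^ 2) * (1 - rho z 0 k ^ 2) :=
                Finset.sum_le_sum key
            _ = 4 / (1 - ‖z 0‖ ^ 2) * ∑ k ∈ G.erase 0, (1 - rho z 0 k ^ 2) := by
                rw [Finset.mul_sum]
            _ ≤ c₀ := by
                rw [hc₀]
                have hA : (0:ℝ) < 1 - ‖z 0‖ ^ 2 := by linarith
                have := sum_one_sub_rho_sq_le hz hδ (hδd 0) (G.erase 0)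
                  (Finset.notMem_erase _ _)
                have h40 : (0:ℝ) ≤ 4 / (1 - ‖z 0‖ ^ 2) := by positivity
                exact mul_le_mul_of_nonneg_left this h40
end LogBound
section BjLemmas
variable {z : ℕ → ℂ} {j : ℕ}

lemma Bj_factor_abs_le (hz : ∀ n, ‖z n‖ < 1) {w : ℂ} (hw : ‖w‖ < 1)
    (k : ℕ) :
    ‖(-(conj (z k)) / (‖z k‖ : ℂ)) *
      ((w - z k) / (1 - conj (z k) * w))‖ ≤ 1 := by
  rcases eq_or_ne (z k) 0 with h0 | h0
  · simp [h0]
  · rw [norm_mul]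
    have h1 : ‖-(conj (z k)) / (‖z k‖ : ℂ)‖ = 1 := by
      rw [norm_div, norm_neg, Complex.norm_conj, Complex.norm_real, Real.norm_eq_abs,
        _root_.abs_of_nonneg (norm_nonneg _), div_self (by simpa using h0)]
    rw [h1, one_mul, norm_div]
    have hne : 1 - conj (z k) * w ≠ 0 := one_sub_mul_ne hw (hz k).le
    rw [div_le_one (norm_pos_iff.mpr hne)]
    exact abs_sub_le_abs_one_sub hw.le (hz k).le

lemma Bj_abs_le_one (hz : ∀ n, ‖z n‖ < 1) {w : ℂ} (hw : ‖w‖ < 1) :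
    ‖Bj z j w‖ ≤ 1 := by
  set f : {k : ℕ // k ≠ j} → ℂ := fun k =>
    (-(conj (z (k : ℕ))) / (‖z (k : ℕ)‖ : ℂ)) *
      ((w - z (k : ℕ)) / (1 - conj (z (k : ℕ)) * w)) with hf
  by_cases hm : Multipliable f
  · have h2 : HasProd (fun k => ‖f k‖) (‖Bj z j w‖) := by
      have := hm.hasProd.map (normHom : ℂ →*₀ ℝ) continuous_norm
      simpa [Bj, Function.comp_def, normHom_apply] using this
    refine le_of_tendsto' h2 fun F => ?_
    exact Finset.prod_le_one (fun k _ => norm_nonneg _)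
      (fun k _ => Bj_factor_abs_le hz hw k)
  · rw [Bj, tprod_eq_one_of_not_multipliable hm]
    simp

lemma Bj_self_eq_zero_or_ge (hz : ∀ n, ‖z n‖ < 1) {δ : ℝ} (hδ1 : δ ≤ 1)
    (hδd : δ ≤ delta z j) :
    Bj z j (z j) = 0 ∨ δ ≤ ‖Bj z j (z j)‖ := by
  set f : {k : ℕ // k ≠ j} → ℂ := fun k =>
    (-(conj (z (k : ℕ))) / (‖z (k : ℕ)‖ : ℂ)) *
      ((z j - z (k : ℕ)) / (1 - conj (z (k : ℕ)) * z j)) with hf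
  by_cases hm : Multipliable f
  · by_cases hzero : ∃ k : {k : ℕ // k ≠ j}, z (k : ℕ) = 0
    · left
      obtain ⟨k, hk⟩ := hzero
      have h0 : HasProd f 0 := by
        have hev : ∀ᶠ F in (atTop : Filter (Finset {k : ℕ // k ≠ j})),
            (∏ i ∈ F, f i) = 0 := by
          refine eventually_atTop.2 ⟨{k}, fun F hF => ?_⟩
          refine Finset.prod_eq_zero (hF (Finset.mem_singleton_self k)) ?_
          simp [hf, hk]
        exact Tendsto.congr' (by filter_upwards [hev] with F hF using hF.symm)
          tendsto_const_nhds
      have : Bj z j (z j) = 0 := hm.hasProd.unique h0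
      exact this
    · right
      push_neg at hzero
      have h2 : HasProd (fun k => ‖f k‖) (‖Bj z j (z j)‖) := by
        have := hm.hasProd.map (normHom : ℂ →*₀ ℝ) continuous_norm
        simpa [Bj, Function.comp_def, normHom_apply] using this
      have h3 : ∀ k : {k : ℕ // k ≠ j}, ‖f k‖ = rho z j (k : ℕ) := by
        intro k
        rw [hf]
        simp only [norm_mul, norm_div, norm_neg, Complex.norm_conj, Complex.norm_real, Real.norm_eq_abs,
          _root_.abs_of_nonneg (norm_nonneg _)]
        rw [div_self (by simpa using hzero k), one_mul, rho, norm_div]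
      have h4 : HasProd (fun k : {k : ℕ // k ≠ j} => rho z j (k : ℕ))
          (‖Bj z j (z j)‖) := by
        exact (funext h3 : (fun k : {k : ℕ // k ≠ j} => ‖f k‖) = _) ▸ h2
      have := (delta_hasProd hz j).unique h4
      rw [← this]; exact hδd
  · right
    rw [Bj, tprod_eq_one_of_not_multipliable hm]
    simpa using hδ1
end BjLemmas
section Core
variable {z : ℕ → ℂ} {δ : ℝ}

lemma frac_abs_le {x y : ℂ} (hx : ‖x‖ ≤ 1) (hy : ‖y‖ < 1) :
    ‖(1 + conj x * y) / (1 - conj x * y)‖ ≤ 2 / (1 - ‖y‖) := by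
  have hxy : ‖conj x * y‖ ≤ ‖y‖ := by
    rw [norm_mul, Complex.norm_conj]
    exact mul_le_of_le_one_left (norm_nonneg y) hx
  have hden : 1 - ‖y‖ ≤ ‖1 - conj x * y‖ := by
    calc 1 - ‖y‖ ≤ 1 - ‖conj x * y‖ := by linarith
      _ ≤ ‖1 - conj x * y‖ := by
          have h := norm_sub_norm_le (1 : ℂ) (conj x * y)
          simpa using h
  have hnum : ‖1 + conj x * y‖ ≤ 2 := by
    calc ‖1 + conj x * y‖ ≤ ‖(1:ℂ)‖ + ‖conj x * y‖ :=
          norm_add_le _ _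
      _ ≤ 1 + 1 := by rw [norm_one]; linarith
      _ = 2 := by norm_num
  have hypos : 0 < 1 - ‖y‖ := by linarith
  rw [norm_div]
  exact div_le_div₀ (by norm_num) hnum hypos hden

lemma re_sum_bound (hz : ∀ n, ‖z n‖ < 1) (hδ : 0 < δ)
    (hδd : ∀ i, δ ≤ delta z i) {w : ℂ} (hw : ‖w‖ < 1) (j : ℕ) :
    (∑' m : {m : ℕ // ‖z j‖ ≤ ‖z (m : ℕ)‖},
        ((1 - ‖z (m : ℕ)‖ ^ 2) / ‖1 - conj (z (m : ℕ)) * w‖) ^ 2)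
      - (2 + 4 * Real.log δ⁻¹) ≤
    (∑' m : {m : ℕ // ‖z j‖ ≤ ‖z (m : ℕ)‖},
      ((1 + conj (z (m : ℕ)) * w) / (1 - conj (z (m : ℕ)) * w) -
        (1 + conj (z (m : ℕ)) * z j) / (1 - conj (z (m : ℕ)) * z j)) *
        ((1 - ‖z (m : ℕ)‖ ^ 2 : ℝ) : ℂ)).re := by
  classical
  set I := {m : ℕ // ‖z j‖ ≤ ‖z (m : ℕ)‖}
  set a : I → ℂ := fun m =>
    ((1 + conj (z (m : ℕ)) * w) / (1 - conj (z (m : ℕ)) * w) -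
      (1 + conj (z (m : ℕ)) * z j) / (1 - conj (z (m : ℕ)) * z j)) *
      ((1 - ‖z (m : ℕ)‖ ^ 2 : ℝ) : ℂ) with ha
  set t : I → ℝ := fun m =>
    ((1 - ‖z (m : ℕ)‖ ^ 2) / ‖1 - conj (z (m : ℕ)) * w‖) ^ 2 with ht
  set P : I → ℝ := fun m =>
    ((1 + conj (z (m : ℕ)) * w) / (1 - conj (z (m : ℕ)) * w)).re *
      (1 - ‖z (m : ℕ)‖ ^ 2) with hP
  set Q : I → ℝ := fun m =>
    ((1 + conj (z (m : ℕ)) * z j) / (1 - conj (z (m : ℕ)) * z j)).re *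
      (1 - ‖z (m : ℕ)‖ ^ 2) with hQ
  have hc : ∀ m : ℕ, 0 ≤ 1 - ‖z m‖ ^ 2 := by
    intro m; have := hz m; nlinarith [norm_nonneg (z m)]
  have hcsum : Summable (fun m : I => 1 - ‖z (m : ℕ)‖ ^ 2) :=
    (blaschke_summable hz hδ hδd).comp_injective Subtype.val_injective
  -- summability of a
  have ha_sum : Summable a := by
    refine Summable.of_norm_bounded
      (g := fun m : I => (2 / (1 - ‖w‖) + 2 / (1 - ‖z j‖)) *
        (1 - ‖z (m : ℕ)‖ ^ 2)) (hcsum.mul_left _) ?_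
    intro m
    rw [ha]
    simp only [norm_mul, Complex.norm_real, Real.norm_eq_abs,
      _root_.abs_of_nonneg (hc (m : ℕ))]
    have h1 : ‖(1 + conj (z (m : ℕ)) * w) / (1 - conj (z (m : ℕ)) * w) -
        (1 + conj (z (m : ℕ)) * z j) / (1 - conj (z (m : ℕ)) * z j)‖ ≤
        2 / (1 - ‖w‖) + 2 / (1 - ‖z j‖) := by
      calc ‖_‖ ≤ ‖(1 + conj (z (m : ℕ)) * w) / (1 - conj (z (m : ℕ)) * w)‖
            + ‖(1 + conj (z (m : ℕ)) * z j) / (1 - conj (z (m : ℕ)) * z j)‖ := by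
              simpa [sub_eq_add_neg] using norm_add_le
                ((1 + conj (z (m : ℕ)) * w) / (1 - conj (z (m : ℕ)) * w))
                (-((1 + conj (z (m : ℕ)) * z j) / (1 - conj (z (m : ℕ)) * z j)))
        _ ≤ 2 / (1 - ‖w‖) + 2 / (1 - ‖z j‖) :=
            add_le_add (frac_abs_le (hz (m : ℕ)).le hw) (frac_abs_le (hz (m : ℕ)).le (hz j))
    exact mul_le_mul_of_nonneg_right h1 (hc (m : ℕ))
  have hre : ∀ m : I, (a m).re = P m - Q m := by
    intro m
    rw [ha, hP, hQ]
    simp only [Complex.mul_re, Complex.ofReal_re, Complex.ofReal_im, Complex.sub_re]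
    ring
  have hre_sum : Summable (fun m : I => (a m).re) := (Complex.hasSum_re ha_sum.hasSum).summable
  -- Q nonneg
  have hQnonneg : ∀ m : I, 0 ≤ Q m := by
    intro m
    rw [hQ]
    dsimp only
    rw [re_div_one_sub]
    have h1 : normSq (conj (z (m : ℕ)) * z j) ≤ 1 := by
      rw [map_mul, Complex.normSq_conj]
      have hm := hz (m : ℕ); have hj := hz j
      rw [← Complex.sq_norm, ← Complex.sq_norm]
      have e1 : ‖z (m : ℕ)‖ ^ 2 ≤ 1 := by nlinarith [norm_nonneg (z (m : ℕ))]
      have e2 : ‖z j‖ ^ 2 ≤ 1 := by nlinarith [norm_nonneg (z j)]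
      exact mul_le_one₀ e1 (by positivity) e2
    have h2 : 0 ≤ normSq (1 - conj (z (m : ℕ)) * z j) := normSq_nonneg _
    exact mul_nonneg (div_nonneg (by linarith) h2) (hc (m : ℕ))
  -- Q partial sums bounded
  have hQj : Q ⟨j, le_refl _⟩ ≤ 2 := by
    rw [hQ]
    dsimp only
    have hconj : conj (z j) * z j = ((‖z j‖ ^ 2 : ℝ) : ℂ) := by
      rw [← Complex.normSq_eq_conj_mul_self, Complex.normSq_eq_norm_sq]
    rw [hconj]
    set r := ‖z j‖ ^ 2 with hr
    have hr1 : r < 1 := by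
      have := hz j; rw [hr]; nlinarith [norm_nonneg (z j)]
    have hr0 : 0 ≤ r := by positivity
    have hcast : (1 + (r : ℂ)) / (1 - (r : ℂ)) = (((1 + r) / (1 - r) : ℝ) : ℂ) := by
      push_cast; ring
    rw [hcast, Complex.ofReal_re, div_mul_cancel₀ _ (by linarith : (1 : ℝ) - r ≠ 0)]
    linarith
  have hQbound : ∀ F : Finset I, ∑ m ∈ F, Q m ≤ 2 + 4 * Real.log δ⁻¹ := by
    intro F
    rw [← Finset.sum_filter_add_sum_filter_not F (fun m : I => (m : ℕ) = j) Q]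
    have part1 : ∑ m ∈ F.filter (fun m : I => (m : ℕ) = j), Q m ≤ 2 := by
      have hsub1 : F.filter (fun m : I => (m : ℕ) = j) ⊆ {⟨j, le_refl _⟩} := by
        intro m hm
        rw [Finset.mem_filter] at hm
        rw [Finset.mem_singleton]
        exact Subtype.ext hm.2
      calc ∑ m ∈ F.filter (fun m : I => (m : ℕ) = j), Q m
          ≤ ∑ m ∈ ({⟨j, le_refl _⟩} : Finset I), Q m :=
            Finset.sum_le_sum_of_subset_of_nonneg hsub1 (fun m _ _ => hQnonneg m)
        _ = Q ⟨j, le_refl _⟩ := Finset.sum_singleton _ _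
        _ ≤ 2 := hQj
    have part2 : ∑ m ∈ F.filter (fun m : I => ¬((m : ℕ) = j)), Q m ≤ 4 * Real.log δ⁻¹ := by
      set F' := F.filter (fun m : I => ¬((m : ℕ) = j)) with hF'
      have hkey : ∀ m ∈ F', Q m ≤ 2 * (1 - rho z j (m : ℕ) ^ 2) := by
        intro m hm
        have hNpos : 0 < normSq (1 - conj (z (m : ℕ)) * z j) := by
          rw [Complex.normSq_pos]; exact one_sub_mul_ne (hz j) (hz (m : ℕ)).le
        rw [hQ]
        dsimp only
        rw [re_div_one_sub, one_sub_rho_sq hz j (m : ℕ)]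
        rw [div_mul_eq_mul_div, mul_div_assoc', div_le_div_iff₀ hNpos hNpos]
        have hns : normSq (conj (z (m : ℕ)) * z j) =
            ‖z (m : ℕ)‖ ^ 2 * ‖z j‖ ^ 2 := by
          rw [map_mul, Complex.normSq_conj, Complex.normSq_eq_norm_sq, Complex.normSq_eq_norm_sq]
        rw [hns]
        have hAB : ‖z j‖ ^ 2 ≤ ‖z (m : ℕ)‖ ^ 2 :=
          pow_le_pow_left₀ (norm_nonneg _) m.2 2
        have hB1 : ‖z (m : ℕ)‖ ^ 2 ≤ 1 := by
          have := hz (m : ℕ); nlinarith [norm_nonneg (z (m : ℕ))]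
        have hA0 : 0 ≤ ‖z j‖ ^ 2 := by positivity
        nlinarith [hc (m : ℕ), hNpos, mul_le_mul_of_nonneg_right
          (by nlinarith : 1 - ‖z (m : ℕ)‖ ^ 2 * ‖z j‖ ^ 2 ≤
            2 * (1 - ‖z j‖ ^ 2)) (hc (m : ℕ))]
      have himage : j ∉ F'.image (fun m : I => (m : ℕ)) := by
        intro hj
        rw [Finset.mem_image] at hj
        obtain ⟨m, hm, hmj⟩ := hj
        rw [hF', Finset.mem_filter] at hm
        exact hm.2 hmj
      calc ∑ m ∈ F', Q m ≤ ∑ m ∈ F', 2 * (1 - rho z j (m : ℕ) ^ 2) :=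
            Finset.sum_le_sum hkey
        _ = 2 * ∑ m ∈ F', (1 - rho z j (m : ℕ) ^ 2) := by rw [Finset.mul_sum]
        _ = 2 * ∑ k ∈ F'.image (fun m : I => (m : ℕ)), (1 - rho z j k ^ 2) := by
            rw [Finset.sum_image (fun x _ y _ h => Subtype.ext h)]
        _ ≤ 2 * (2 * Real.log δ⁻¹) := by
            have := sum_one_sub_rho_sq_le hz hδ (hδd j) _ himage
            linarith
        _ = 4 * Real.log δ⁻¹ := by ring
    linarith
  have hQsum : Summable Q := summable_of_sum_le hQnonneg hQbound
  have hQtsum : ∑' m, Q m ≤ 2 + 4 * Real.log δ⁻¹ := Summable.tsum_le_of_sum_le hQsum hQbound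
  have hPsum : Summable P := by
    refine (hre_sum.add hQsum).congr fun m => ?_
    rw [hre m]; ring
  -- t ≤ P
  have hPt : ∀ m : I, t m ≤ P m := by
    intro m
    have hNpos : 0 < normSq (1 - conj (z (m : ℕ)) * w) := by
      rw [Complex.normSq_pos]; exact one_sub_mul_ne hw (hz (m : ℕ)).le
    rw [ht, hP]
    dsimp only
    rw [re_div_one_sub, div_pow, Complex.sq_norm (1 - conj (z (m : ℕ)) * w), div_mul_eq_mul_div,
      div_le_div_iff₀ hNpos hNpos]
    have hns : normSq (conj (z (m : ℕ)) * w) =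
        ‖z (m : ℕ)‖ ^ 2 * ‖w‖ ^ 2 := by
      rw [map_mul, Complex.normSq_conj, Complex.normSq_eq_norm_sq, Complex.normSq_eq_norm_sq]
    rw [hns]
    have hw2 : ‖w‖ ^ 2 ≤ 1 := by nlinarith [norm_nonneg w]
    have hB0 : 0 ≤ ‖z (m : ℕ)‖ ^ 2 := by positivity
    nlinarith [hc (m : ℕ), hNpos, mul_le_mul_of_nonneg_right
      (by nlinarith : (1 - ‖z (m : ℕ)‖ ^ 2) ≤
        1 - ‖z (m : ℕ)‖ ^ 2 * ‖w‖ ^ 2) (hc (m : ℕ))]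
  have htnonneg : ∀ m : I, 0 ≤ t m := by intro m; rw [ht]; positivity
  have htsum : Summable t := Summable.of_nonneg_of_le htnonneg hPt hPsum
  have htP : ∑' m, t m ≤ ∑' m, P m := Summable.tsum_le_tsum hPt htsum hPsum
  rw [Complex.re_tsum ha_sum]
  have h1 : ∑' m, (a m).re = ∑' m, P m - ∑' m, Q m := by
    rw [← Summable.tsum_sub hPsum hQsum]
    exact tsum_congr hre
  rw [h1]
  linarith
end Core

/-- (Jones' estimate.) There is a constant `C(δ)`, depending only on the
separation constant `δ = inf_j δ_j > 0` of the interpolating sequence, such that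
`|g j (w)| ≤ C(δ) ((1-|z j|²)/|1 - conj (z j) w|)² exp(-∑_{|z m| ≥ |z j|} ((1-|z m|²)/|1 - conj (z m) w|)²)`. -/
theorem jones_estimate :
    ∃ C : ℝ → ℝ, ∀ z : ℕ → ℂ, (∀ n, z n ∈ ball (0 : ℂ) 1) → IsInterpolating z →
      ∀ _ : 0 < ⨅ j : ℕ, delta z j,
      ∀ (j : ℕ), ∀ w ∈ ball (0 : ℂ) 1,
        ‖jonesG z j w‖ ≤
          C (⨅ j : ℕ, delta z j) *
            ((1 - ‖z j‖ ^ 2) / ‖1 - conj (z j) * w‖) ^ 2 *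
            Real.exp (-∑' m : {m : ℕ // ‖z j‖ ≤ ‖z (m : ℕ)‖},
              ((1 - ‖z (m : ℕ)‖ ^ 2) /
                ‖1 - conj (z (m : ℕ)) * w‖) ^ 2) := by
  classical
  refine ⟨fun t => Real.exp 2 / t ^ 5, ?_⟩
  intro z hzb _hint hpos j w hw
  have hz : ∀ n, ‖z n‖ < 1 := by
    intro n
    have := hzb n
    simpa [mem_ball, Complex.dist_eq] using this
  have hw1 : ‖w‖ < 1 := by simpa [mem_ball, Complex.dist_eq] using hw
  set δ : ℝ := ⨅ j : ℕ, delta z j with hδdef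
  have hδpos : 0 < δ := hpos
  have hbdd : BddBelow (Set.range (delta z)) := by
    refine ⟨0, ?_⟩
    rintro x ⟨i, rfl⟩
    exact delta_nonneg hz i
  have hδle : ∀ i, δ ≤ delta z i := fun i => ciInf_le hbdd i
  have hδ1 : δ ≤ 1 := (hδle 0).trans (delta_le_one hz 0)
  -- notation
  set T : ℝ := ∑' m : {m : ℕ // ‖z j‖ ≤ ‖z (m : ℕ)‖},
    ((1 - ‖z (m : ℕ)‖ ^ 2) / ‖1 - conj (z (m : ℕ)) * w‖) ^ 2 with hT
  set S : ℂ := ∑' m : {m : ℕ // ‖z j‖ ≤ ‖z (m : ℕ)‖},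
    ((1 + conj (z (m : ℕ)) * w) / (1 - conj (z (m : ℕ)) * w) -
      (1 + conj (z (m : ℕ)) * z j) / (1 - conj (z (m : ℕ)) * z j)) *
      ((1 - ‖z (m : ℕ)‖ ^ 2 : ℝ) : ℂ) with hS
  set A : ℝ := (1 - ‖z j‖ ^ 2) / ‖1 - conj (z j) * w‖ with hA
  have hA0 : 0 ≤ A := by
    rw [hA]
    have := hz j
    have h1 : 0 ≤ 1 - ‖z j‖ ^ 2 := by nlinarith [norm_nonneg (z j)]
    positivity
  have hCpos : 0 < Real.exp 2 / δ ^ 5 := by positivity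
  -- case Bj z j (z j) = 0
  rcases Bj_self_eq_zero_or_ge hz hδ1 (hδle j) with hB0 | hBlow
  · rw [jonesG, hB0, div_zero, zero_mul, zero_mul, norm_zero]
    have h2 : 0 < Real.exp (-T) := Real.exp_pos _
    have h3 : (0:ℝ) ≤ A ^ 2 := sq_nonneg A
    positivity
  · -- abs of jonesG
    have habs_sq : ‖(((1 - ‖z j‖ ^ 2 : ℝ) : ℂ) /
        (1 - conj (z j) * w)) ^ 2‖ = A ^ 2 := by
      rw [norm_pow, norm_div, Complex.norm_real, Real.norm_eq_abs, hA,
        _root_.abs_of_nonneg (by nlinarith [norm_nonneg (z j), hz j] :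
          (0:ℝ) ≤ 1 - ‖z j‖ ^ 2)]
    have heq : ‖jonesG z j w‖ =
        ‖Bj z j w / Bj z j (z j)‖ * A ^ 2 * Real.exp (-S.re) := by
      rw [jonesG, norm_mul, norm_mul, habs_sq, Complex.norm_exp, Complex.neg_re]
    rw [heq]
    have hratio : ‖Bj z j w / Bj z j (z j)‖ ≤ δ⁻¹ := by
      rw [norm_div]
      have := Bj_abs_le_one (z := z) (j := j) hz hw1
      calc ‖Bj z j w‖ / ‖Bj z j (z j)‖ ≤ 1 / δ :=
            div_le_div₀ (by norm_num) this hδpos hBlow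
        _ = δ⁻¹ := one_div δ
    have hre : T - (2 + 4 * Real.log δ⁻¹) ≤ S.re := re_sum_bound hz hδpos hδle hw1 j
    have hexp : Real.exp (-S.re) ≤ Real.exp (2 + 4 * Real.log δ⁻¹) * Real.exp (-T) := by
      rw [← Real.exp_add]
      exact Real.exp_le_exp.mpr (by linarith)
    calc ‖Bj z j w / Bj z j (z j)‖ * A ^ 2 * Real.exp (-S.re)
        ≤ δ⁻¹ * A ^ 2 * (Real.exp (2 + 4 * Real.log δ⁻¹) * Real.exp (-T)) := by
          have h1 : (0:ℝ) ≤ A ^ 2 := sq_nonneg A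
          have h2 : (0:ℝ) ≤ Real.exp (-S.re) := (Real.exp_pos _).le
          have h3 : (0:ℝ) ≤ δ⁻¹ * A ^ 2 := mul_nonneg (by positivity) h1
          exact mul_le_mul (mul_le_mul_of_nonneg_right hratio h1) hexp h2 h3
      _ = Real.exp 2 / δ ^ 5 * A ^ 2 * Real.exp (-T) := by
          have hlog : Real.exp (2 + 4 * Real.log δ⁻¹) = Real.exp 2 * δ⁻¹ ^ 4 := by
            rw [Real.exp_add]
            congr 1
            rw [show (4 : ℝ) * Real.log δ⁻¹ = Real.log (δ⁻¹ ^ 4) by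
              rw [Real.log_pow]; push_cast; ring]
            exact Real.exp_log (by positivity)
          rw [hlog]
          field_simp

end ThinPaper
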